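/- arXiv:2310.17003 — 10 statements merged into one kernel-verified Lean document; each statement's English description precedes it below -/
import Mathlib

section
/- Let α ∈ (0,1), ξ > 0 and ε1, δ1, q1 > 0 satisfy ε1 · max(1, ξ/(1+αξ)) ≤ δ1 + q1. Suppose x1, y1 : [0,∞) → ℝ are such that x1(t) ≥ 0 and y1(t) > 0 for all t ≥ 0, y1 is differentiable, and y1'(t) = (ε1 (x1(t)+ξ)/(1+x1(t)+αξ) − δ1 − q1) · y1(t) for all t ≥ 0. Then y1 is nonincreasing on [0,∞); in particular y1(t) ≤ y1(0) for all t ≥ 0, so the predator population in the AF patch remains bounded for all time (Theorem 2.1, blow-up prevention by drift). -/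
/-!
For `x ≥ 0` the Holling-type factor `(x + ξ) / (x + (1 + αξ))` lies between its value `ξ / (1 + αξ)`
at `x = 0` and its limit `1`, so the per-capita growth rate of `y1` is at most
`ε1 · max 1 (ξ / (1 + αξ)) - δ1 - q1 ≤ 0`. A positive solution therefore has `y1' ≤ 0`.
-/

open Set

theorem add_div_add_le_max_one_div {a b x : ℝ} (hb : 0 < b) (hx : 0 ≤ x) :
    (x + a) / (x + b) ≤ max 1 (a / b) := by
  have hab : a ≤ max 1 (a / b) * b := (div_le_iff₀ hb).mp (le_max_right _ _)
  have hxM : x ≤ max 1 (a / b) * x := le_mul_of_one_le_left hx (le_max_left _ _)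
  rw [div_le_iff₀ (by positivity)]
  linarith

theorem antitoneOn_Ici_of_deriv_eq_mul {f r : ℝ → ℝ} {a : ℝ}
    (hf : ContinuousOn f (Ici a)) (hf' : DifferentiableOn ℝ f (Ioi a))
    (hr : ∀ t ∈ Ioi a, r t ≤ 0) (hf_nonneg : ∀ t ∈ Ioi a, 0 ≤ f t)
    (hderiv : ∀ t ∈ Ioi a, deriv f t = r t * f t) :
    AntitoneOn f (Ici a) := by
  refine antitoneOn_of_deriv_nonpos (convex_Ici a) hf (by rwa [interior_Ici]) ?_
  intro t ht
  rw [interior_Ici] at ht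
  rw [hderiv t ht]
  exact mul_nonpos_of_nonpos_of_nonneg (hr t ht) (hf_nonneg t ht)

theorem drift_prevents_predator_blowup_general
    (α ξ ε1 δ1 q1 : ℝ)
    (hα : 0 < α ∧ α < 1) (hξ : 0 < ξ)
    (hε1 : 0 < ε1)
    (hdamp : ε1 * max 1 (ξ / (1 + α * ξ)) ≤ δ1 + q1)
    (x1 y1 : ℝ → ℝ)
    (hx1 : ∀ t : ℝ, 0 ≤ t → 0 ≤ x1 t)
    (hy1pos : ∀ t : ℝ, 0 ≤ t → 0 < y1 t)
    (hy1diff : Differentiable ℝ y1)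
    (hode : ∀ t : ℝ, 0 ≤ t →
      deriv y1 t =
        (ε1 * (x1 t + ξ) / (1 + x1 t + α * ξ) - δ1 - q1) * y1 t) :
    AntitoneOn y1 (Set.Ici (0 : ℝ)) ∧ ∀ t : ℝ, 0 ≤ t → y1 t ≤ y1 0 := by
  have hαξ : 0 < 1 + α * ξ := by have := mul_pos hα.1 hξ; linarith
  have hrate : ∀ t ∈ Ioi (0 : ℝ), ε1 * (x1 t + ξ) / (1 + x1 t + α * ξ) - δ1 - q1 ≤ 0 := by
    intro t ht
    have hfactor := add_div_add_le_max_one_div (a := ξ) hαξ (hx1 t (le_of_lt ht))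
    rw [← add_assoc, add_comm (x1 t) 1] at hfactor
    rw [mul_div_assoc]
    linarith [mul_le_mul_of_nonneg_left hfactor hε1.le]
  have hanti : AntitoneOn y1 (Ici 0) :=
    antitoneOn_Ici_of_deriv_eq_mul hy1diff.continuous.continuousOn hy1diff.differentiableOn
      hrate (fun t ht => (hy1pos t (le_of_lt ht)).le) (fun t ht => hode t (le_of_lt ht))
  exact ⟨hanti, fun t ht => hanti self_mem_Ici ht ht⟩

/-- Theorem 2.1 (blow-up prevention by drift): if
`ε1 · max(1, ξ/(1+αξ)) ≤ δ1 + q1`, then any positive solution `y1` of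
`y1' = (ε1 (x1+ξ)/(1+x1+αξ) − δ1 − q1) y1` with `x1 ≥ 0` is nonincreasing
on `[0,∞)`; in particular `y1 t ≤ y1 0` for all `t ≥ 0`. -/
theorem drift_prevents_predator_blowup
    (α ξ ε1 δ1 q1 : ℝ)
    (hα : 0 < α ∧ α < 1) (hξ : 0 < ξ)
    (hε1 : 0 < ε1) (hδ1 : 0 < δ1) (hq1 : 0 < q1)
    (hdamp : ε1 * max 1 (ξ / (1 + α * ξ)) ≤ δ1 + q1)
    (x1 y1 : ℝ → ℝ)
    (hx1 : ∀ t : ℝ, 0 ≤ t → 0 ≤ x1 t)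
    (hy1pos : ∀ t : ℝ, 0 ≤ t → 0 < y1 t)
    (hy1diff : Differentiable ℝ y1)
    (hode : ∀ t : ℝ, 0 ≤ t →
      deriv y1 t =
        (ε1 * (x1 t + ξ) / (1 + x1 t + α * ξ) - δ1 - q1) * y1 t) :
    AntitoneOn y1 (Set.Ici (0 : ℝ)) ∧ ∀ t : ℝ, 0 ≤ t → y1 t ≤ y1 0 :=
  drift_prevents_predator_blowup_general α ξ ε1 δ1 q1 hα hξ hε1 hdamp x1 y1 hx1 hy1pos hy1diff hode
end

section
/- (Lemma 2.1, existence of the pest free state in the crop field for the drift model.) Let α ∈ (0,1) and k_p, k_c, ε1, ε2, δ1, δ2, q1, q2 > 0 with ε1 > δ1 + q1 and 0 < ξ < (δ1+q1)/(ε1 − α(δ1+q1)). Define x1* = ((δ1+q1)(1+αξ) − ε1 ξ)/(ε1 − (δ1+q1)), y1* = (1 − x1*/k_p)(1 + x1* + αξ), and y2* = q2 y1*/δ2. Then x1* > 0 and the point (x1*, y1*, 0, y2*) is an equilibrium of the drift AF patch model, i.e., all four right-hand sides vanish there. -/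
/-!
The pest-free crop state is obtained by solving the equilibrium equations one at a time.
The pest's per-capita growth rate in the AF patch vanishes exactly when
`ε₁ (x + ξ) = (δ₁ + q₁) (1 + x + α ξ)`, a linear equation in `x` whose root is `x₁*`; its
numerator is positive precisely by the upper bound on `ξ`. Given `x₁*`, the prey equation
forces `y₁*`, and in the crop field the predator drifting in at rate `q₂ y₁*` must be balanced
by its death rate `δ₂ y₂*`.
-/

section PestFreeState

variable {α ξ ε s : ℝ}

lemma pestFree_prey_pos (hα : α < 1) (hs : 0 < s) (hεs : s < ε) (hξ : ξ < s / (ε - α * s)) :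
    0 < (s * (1 + α * ξ) - ε * ξ) / (ε - s) := by
  have hαs : 0 < ε - α * s := by nlinarith
  have hnum : 0 < s * (1 + α * ξ) - ε * ξ := by
    have := (lt_div_iff₀ hαs).mp hξ
    linarith
  exact div_pos hnum (sub_pos.mpr hεs)

lemma pestFree_prey_balance (hεs : ε - s ≠ 0) :
    let x := (s * (1 + α * ξ) - ε * ξ) / (ε - s)
    ε * (x + ξ) = s * (1 + x + α * ξ) := by
  intro x
  have hx : x * (ε - s) = s * (1 + α * ξ) - ε * ξ := div_mul_cancel₀ _ hεs
  linear_combination hx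

end PestFreeState

lemma logistic_sub_holling_eq_zero {x k D : ℝ} (hD : D ≠ 0) :
    x * (1 - x / k) - x * ((1 - x / k) * D) / D = 0 := by
  rw [mul_div_assoc, mul_div_cancel_right₀ _ hD, sub_self]

lemma conversion_sub_loss_eq_zero {ε δ q x ξ y D : ℝ} (hD : D ≠ 0)
    (hbal : ε * (x + ξ) = (δ + q) * D) :
    ε * ((x + ξ) / D) * y - δ * y - q * y = 0 := by
  rw [← mul_div_assoc, hbal, mul_div_cancel_right₀ _ hD]
  ring

lemma drift_balance_eq_zero {ε δ q y : ℝ} (hδ : δ ≠ 0) :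
    ε * ((0 : ℝ) / (1 + 0)) * (q * y / δ) - δ * (q * y / δ) + q * y = 0 := by
  rw [zero_div, mul_zero, zero_mul, mul_div_cancel₀ _ hδ]
  ring

theorem drift_pest_free_crop_field_exists_general
    (α ξ kp kc ε1 ε2 δ1 δ2 q1 q2 : ℝ)
    (hα : 0 < α ∧ α < 1)
    (hδ1 : 0 < δ1) (hδ2 : 0 < δ2)
    (hq1 : 0 < q1)
    (hgrow : ε1 > δ1 + q1)
    (hξpos : 0 < ξ)
    (hξlt : ξ < (δ1 + q1) / (ε1 - α * (δ1 + q1)))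
    (x1s y1s y2s : ℝ)
    (hx1s : x1s = ((δ1 + q1) * (1 + α * ξ) - ε1 * ξ) / (ε1 - (δ1 + q1)))
    (hy1s : y1s = (1 - x1s / kp) * (1 + x1s + α * ξ))
    (hy2s : y2s = q2 * y1s / δ2) :
    0 < x1s ∧
    x1s * (1 - x1s / kp) - x1s * y1s / (1 + x1s + α * ξ) = 0 ∧
    ε1 * ((x1s + ξ) / (1 + x1s + α * ξ)) * y1s - δ1 * y1s - q1 * y1s = 0 ∧
    (0 : ℝ) * (1 - 0 / kc) - 0 * y2s / (1 + 0) = 0 ∧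
    ε2 * ((0 : ℝ) / (1 + 0)) * y2s - δ2 * y2s + q2 * y1s = 0 := by
  have hx1pos : 0 < x1s := hx1s ▸ pestFree_prey_pos hα.2 (by linarith) hgrow hξlt
  have hD : 1 + x1s + α * ξ ≠ 0 := by
    have := mul_pos hα.1 hξpos
    positivity
  have hbal : ε1 * (x1s + ξ) = (δ1 + q1) * (1 + x1s + α * ξ) :=
    hx1s ▸ pestFree_prey_balance (sub_ne_zero.mpr hgrow.ne')
  refine ⟨hx1pos, hy1s ▸ logistic_sub_holling_eq_zero hD,
    conversion_sub_loss_eq_zero hD hbal, by simp, hy2s ▸ drift_balance_eq_zero hδ2.ne'⟩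

/-- Lemma 2.1: existence of the pest free state in the crop field for the
drift AF patch model. -/
theorem drift_pest_free_crop_field_exists
    (α ξ kp kc ε1 ε2 δ1 δ2 q1 q2 : ℝ)
    (hα : 0 < α ∧ α < 1)
    (hkp : 0 < kp) (hkc : 0 < kc)
    (hε1 : 0 < ε1) (hε2 : 0 < ε2)
    (hδ1 : 0 < δ1) (hδ2 : 0 < δ2)
    (hq1 : 0 < q1) (hq2 : 0 < q2)
    (hgrow : ε1 > δ1 + q1)
    (hξpos : 0 < ξ)
    (hξlt : ξ < (δ1 + q1) / (ε1 - α * (δ1 + q1)))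
    (x1s y1s y2s : ℝ)
    (hx1s : x1s = ((δ1 + q1) * (1 + α * ξ) - ε1 * ξ) / (ε1 - (δ1 + q1)))
    (hy1s : y1s = (1 - x1s / kp) * (1 + x1s + α * ξ))
    (hy2s : y2s = q2 * y1s / δ2) :
    0 < x1s ∧
    x1s * (1 - x1s / kp) - x1s * y1s / (1 + x1s + α * ξ) = 0 ∧
    ε1 * ((x1s + ξ) / (1 + x1s + α * ξ)) * y1s - δ1 * y1s - q1 * y1s = 0 ∧
    (0 : ℝ) * (1 - 0 / kc) - 0 * y2s / (1 + 0) = 0 ∧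
    ε2 * ((0 : ℝ) / (1 + 0)) * y2s - δ2 * y2s + q2 * y1s = 0 :=
  drift_pest_free_crop_field_exists_general α ξ kp kc ε1 ε2 δ1 δ2 q1 q2 hα hδ1 hδ2 hq1 hgrow hξpos
    hξlt x1s y1s y2s hx1s hy1s hy2s
end

section
/- (Sign of the Lyapunov derivative, the core of Lemma 2.10.) Let α ∈ (0,1), ξ > 0, and ε1 > δ̃ > 0, and let k > 0 satisfy k < (1+αξ)(ε1+δ̃)/(ε1−δ̃). Set x* = δ̃(1+αξ)/(ε1−δ̃), p(u) = u/(1+u+αξ), and h(u) = (1 − u/k)(1 + u + αξ). Then for every x with 0 < x < k and x ≥ (k − (1+αξ))/2, one has (p(x) − p(x*))·(h(x) − h(x*)) ≤ 0. -/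
/-- Sign of the Lyapunov derivative, the core of Lemma 2.10: with
`p(u) = u/(1+u+αξ)`, `h(u) = (1 − u/k)(1 + u + αξ)`, and
`x* = δ̃(1+αξ)/(ε1−δ̃)`, if `k < (1+αξ)(ε1+δ̃)/(ε1−δ̃)` then for every
`0 < x < k` with `x ≥ (k − (1+αξ))/2` one has
`(p x − p x*)(h x − h x*) ≤ 0`. -/
theorem lyapunov_derivative_sign
    (α ξ ε1 δt k : ℝ)
    (hα : 0 < α ∧ α < 1) (hξ : 0 < ξ)
    (hδt : 0 < δt) (hε1 : ε1 > δt)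
    (hk : 0 < k)
    (hkbound : k < (1 + α * ξ) * (ε1 + δt) / (ε1 - δt))
    (xs : ℝ) (hxs : xs = δt * (1 + α * ξ) / (ε1 - δt)) :
    ∀ x : ℝ, 0 < x → x < k → x ≥ (k - (1 + α * ξ)) / 2 →
      (x / (1 + x + α * ξ) - xs / (1 + xs + α * ξ)) *
        ((1 - x / k) * (1 + x + α * ξ) - (1 - xs / k) * (1 + xs + α * ξ)) ≤ 0 := by
  intro x hx hxk hxge
  have ha : 0 < 1 + α * ξ := by nlinarith [hα.1]
  have hed : 0 < ε1 - δt := by linarith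
  have hxs_pos : 0 < xs := by
    rw [hxs]; positivity
  -- xs > (k - (1+αξ))/2
  have hxs_gt : (k - (1 + α * ξ)) / 2 < xs := by
    rw [hxs]
    rw [div_lt_div_iff₀ (by norm_num) hed]
    rw [lt_div_iff₀ hed] at hkbound
    nlinarith
  have hd1 : 0 < 1 + x + α * ξ := by linarith
  have hd2 : 0 < 1 + xs + α * ξ := by linarith
  have hsum : k - (1 + α * ξ) < x + xs := by linarith
  -- h x - h xs = (xs - x) * (x + xs + (1+αξ) - k)/k
  have hh : (1 - x / k) * (1 + x + α * ξ) - (1 - xs / k) * (1 + xs + α * ξ)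
      = (xs - x) * (x + xs + (1 + α * ξ) - k) / k := by
    field_simp
    ring
  rcases le_total x xs with hle | hle
  · apply mul_nonpos_of_nonpos_of_nonneg
    · have : x / (1 + x + α * ξ) ≤ xs / (1 + xs + α * ξ) := by
        rw [div_le_div_iff₀ hd1 hd2]
        nlinarith
      linarith
    · rw [hh]
      apply div_nonneg _ hk.le
      apply mul_nonneg (by linarith) (by linarith)
  · apply mul_nonpos_of_nonneg_of_nonpos
    · have : xs / (1 + xs + α * ξ) ≤ x / (1 + x + α * ξ) := by
        rw [div_le_div_iff₀ hd2 hd1]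
        nlinarith
      linarith
    · rw [hh]
      apply div_nonpos_of_nonpos_of_nonneg _ hk.le
      apply mul_nonpos_of_nonpos_of_nonneg (by linarith) (by linarith)
end

section
/- (Lemma 3.3, existence of the pest free state in the crop field for the dispersal model.) Let α ∈ (0,1), k, ε1, ε2, δ1, δ2, k2, k4 > 0, set Q = (δ1δ2 + δ1k4 + k2δ2)/(δ2 + k4), and assume ε1 > Q and 0 < ξ < Q/(ε1 − αQ). Define x1* = (Q(1+αξ) − ε1ξ)/(ε1 − Q), y1* = (1 − x1*/k)(1 + x1* + αξ), and y2* = k4 y1*/(δ2 + k4). Then x1* > 0 and the point (x1*, y1*, 0, y2*) is an equilibrium of the dispersal AF patch model, i.e., all four right-hand sides vanish there. -/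
/-- Lemma 3.3: existence of the pest free state in the crop field for the
dispersal AF patch model. -/
theorem dispersal_pest_free_crop_field_exists
    (α ξ k ε1 ε2 δ1 δ2 k2 k4 : ℝ)
    (hα : 0 < α ∧ α < 1)
    (hk : 0 < k)
    (hε1 : 0 < ε1) (hε2 : 0 < ε2)
    (hδ1 : 0 < δ1) (hδ2 : 0 < δ2)
    (hk2 : 0 < k2) (hk4 : 0 < k4)
    (Q : ℝ) (hQ : Q = (δ1 * δ2 + δ1 * k4 + k2 * δ2) / (δ2 + k4))
    (hgrow : ε1 > Q)
    (hξpos : 0 < ξ) (hξlt : ξ < Q / (ε1 - α * Q))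
    (x1s y1s y2s : ℝ)
    (hx1s : x1s = (Q * (1 + α * ξ) - ε1 * ξ) / (ε1 - Q))
    (hy1s : y1s = (1 - x1s / k) * (1 + x1s + α * ξ))
    (hy2s : y2s = k4 * y1s / (δ2 + k4)) :
    0 < x1s ∧
    x1s * (1 - x1s / k) - x1s * y1s / (1 + x1s + α * ξ) = 0 ∧
    ε1 * ((x1s + ξ) / (1 + x1s + α * ξ)) * y1s - δ1 * y1s
      + k2 * (y2s - y1s) = 0 ∧
    (0 : ℝ) * (1 - 0 / k) - 0 * y2s / (1 + 0) = 0 ∧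
    ε2 * ((0 : ℝ) / (1 + 0)) * y2s - δ2 * y2s + k4 * (y1s - y2s) = 0 := by
  obtain ⟨hα0, hα1⟩ := hα
  have hD : (0:ℝ) < δ2 + k4 := by linarith
  have hQpos : 0 < Q := by
    rw [hQ]; positivity
  have hεQ : 0 < ε1 - Q := by linarith
  have hεαQ : 0 < ε1 - α * Q := by nlinarith
  have hnum : 0 < Q * (1 + α * ξ) - ε1 * ξ := by
    have h := (lt_div_iff₀ hεαQ).mp hξlt
    nlinarith [h]
  have hx1pos : 0 < x1s := by
    rw [hx1s]; exact div_pos hnum hεQ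
  have hden : (0:ℝ) < 1 + x1s + α * ξ := by positivity
  have hden' : (1 + x1s + α * ξ) ≠ 0 := hden.ne'
  have hkey : ε1 * (x1s + ξ) = Q * (1 + x1s + α * ξ) := by
    rw [hx1s]; field_simp; ring
  refine ⟨hx1pos, ?_, ?_, by ring, ?_⟩
  · rw [hy1s]; field_simp; ring
  · rw [hy2s]
    field_simp
    have hQ' : Q * (δ2 + k4) = δ1 * δ2 + δ1 * k4 + k2 * δ2 := by
      rw [hQ]; field_simp
    linear_combination (δ2 + k4) * y1s * hkey + (1 + x1s + α * ξ) * y1s * hQ'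
  · rw [hy2s]; field_simp; ring
end

section
/- (Lemma 3.5, existence of the pest free state in the prairie strip for the dispersal model.) Let α ∈ (0,1), k, ε1, ε2, δ1, δ2, k2, k4 > 0 and ξ > 0, and suppose s := ε1ξ/(1+αξ) − δ1 − k2 ≠ 0. Set Q̃ = δ2 + k4 + k2k4/s and assume 0 < Q̃ < ε2. Define x2* = Q̃/(ε2 − Q̃), y2* = (1 − x2*/k)(1 + x2*), and y1* = −(y2*/k4)·(ε2 x2*/(1 + x2*) − δ2 − k4). Then x2* > 0 and the point (0, y1*, x2*, y2*) is an equilibrium of the dispersal AF patch model, i.e., all four right-hand sides vanish there. -/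
/-!
At the pest free state the prey equation of the prairie strip is trivially satisfied, and
`x₂*` is the inverse of the Holling type II response `x ↦ ε₂ x / (1 + x)` at level `Q̃`, so the
crop-patch prey equation reduces to the prey nullcline, which defines `y₂*`. The two predator
equations are then linear in `(y₁, y₂)`: the choice of `Q̃` turns the definition of `y₁*` into
`s y₁* + k₂ y₂* = 0`, which is exactly the prairie-strip predator equation, while the crop-patch
predator equation holds by the very definition of `y₁*`.
-/

lemma mul_div_one_add_eq_of_eq_div_sub {ε Q x : ℝ} (hε : ε ≠ 0) (hεQ : ε - Q ≠ 0)
    (hx : x = Q / (ε - Q)) : ε * (x / (1 + x)) = Q := by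
  subst hx
  field_simp
  rw [sub_add_cancel, mul_div_cancel_left₀ Q hε]

lemma mul_sub_sub_div_one_add_eq_zero (r : ℝ) {x : ℝ} (hx : 1 + x ≠ 0) :
    x * r - x * (r * (1 + x)) / (1 + x) = 0 := by
  field_simp
  ring

lemma dispersal_balance_eq_zero {r δ κ y₁ y₂ : ℝ} (hκ : κ ≠ 0)
    (hy₁ : y₁ = -(y₂ / κ) * (r - δ - κ)) :
    r * y₂ - δ * y₂ + κ * (y₁ - y₂) = 0 := by
  subst hy₁
  field_simp
  ring

theorem dispersal_pest_free_prairie_strip_exists_general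
    (α ξ k ε1 ε2 δ1 δ2 k2 k4 : ℝ)
    (hk4 : 0 < k4)
    (s : ℝ) (hs : s = ε1 * ξ / (1 + α * ξ) - δ1 - k2) (hs0 : s ≠ 0)
    (Qt : ℝ) (hQt : Qt = δ2 + k4 + k2 * k4 / s)
    (hQtpos : 0 < Qt) (hQtlt : Qt < ε2)
    (x2s y2s y1s : ℝ)
    (hx2s : x2s = Qt / (ε2 - Qt))
    (hy2s : y2s = (1 - x2s / k) * (1 + x2s))
    (hy1s : y1s = -(y2s / k4) * (ε2 * x2s / (1 + x2s) - δ2 - k4)) :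
    0 < x2s ∧
    (0 : ℝ) * (1 - 0 / k) - 0 * y1s / (1 + 0 + α * ξ) = 0 ∧
    ε1 * (((0 : ℝ) + ξ) / (1 + 0 + α * ξ)) * y1s - δ1 * y1s
      + k2 * (y2s - y1s) = 0 ∧
    x2s * (1 - x2s / k) - x2s * y2s / (1 + x2s) = 0 ∧
    ε2 * (x2s / (1 + x2s)) * y2s - δ2 * y2s + k4 * (y1s - y2s) = 0 := by
  have hgap : 0 < ε2 - Qt := sub_pos.2 hQtlt
  have hx2pos : 0 < x2s := hx2s ▸ div_pos hQtpos hgap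
  have hresponse : ε2 * (x2s / (1 + x2s)) = Qt :=
    mul_div_one_add_eq_of_eq_div_sub (hQtpos.trans hQtlt).ne' hgap.ne' hx2s
  rw [mul_div_assoc, hresponse] at hy1s
  have hy1 : s * y1s + k2 * y2s = 0 := by
    rw [hy1s, hQt]
    field_simp
    ring
  have hgain : ε1 * ((0 + ξ) / (1 + 0 + α * ξ)) = s + δ1 + k2 := by
    rw [hs, zero_add, add_zero, mul_div_assoc]
    ring
  refine ⟨hx2pos, by simp, ?_, ?_, ?_⟩
  · rw [hgain]
    linear_combination hy1
  · rw [hy2s]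
    exact mul_sub_sub_div_one_add_eq_zero _ (by positivity)
  · rw [hresponse]
    exact dispersal_balance_eq_zero hk4.ne' hy1s

/-- Lemma 3.5: existence of the pest free state in the prairie strip for the
dispersal AF patch model. -/
theorem dispersal_pest_free_prairie_strip_exists
    (α ξ k ε1 ε2 δ1 δ2 k2 k4 : ℝ)
    (hα : 0 < α ∧ α < 1)
    (hk : 0 < k)
    (hε1 : 0 < ε1) (hε2 : 0 < ε2)
    (hδ1 : 0 < δ1) (hδ2 : 0 < δ2)
    (hk2 : 0 < k2) (hk4 : 0 < k4)
    (hξ : 0 < ξ)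
    (s : ℝ) (hs : s = ε1 * ξ / (1 + α * ξ) - δ1 - k2) (hs0 : s ≠ 0)
    (Qt : ℝ) (hQt : Qt = δ2 + k4 + k2 * k4 / s)
    (hQtpos : 0 < Qt) (hQtlt : Qt < ε2)
    (x2s y2s y1s : ℝ)
    (hx2s : x2s = Qt / (ε2 - Qt))
    (hy2s : y2s = (1 - x2s / k) * (1 + x2s))
    (hy1s : y1s = -(y2s / k4) * (ε2 * x2s / (1 + x2s) - δ2 - k4)) :
    0 < x2s ∧
    (0 : ℝ) * (1 - 0 / k) - 0 * y1s / (1 + 0 + α * ξ) = 0 ∧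
    ε1 * (((0 : ℝ) + ξ) / (1 + 0 + α * ξ)) * y1s - δ1 * y1s
      + k2 * (y2s - y1s) = 0 ∧
    x2s * (1 - x2s / k) - x2s * y2s / (1 + x2s) = 0 ∧
    ε2 * (x2s / (1 + x2s)) * y2s - δ2 * y2s + k4 * (y1s - y2s) = 0 :=
  dispersal_pest_free_prairie_strip_exists_general α ξ k ε1 ε2 δ1 δ2 k2 k4 hk4 s hs hs0 Qt hQt
    hQtpos hQtlt x2s y2s y1s hx2s hy2s hy1s
end

section
/- (Lemma 3.7, existence of the pest free state in both patches for the dispersal model.) Let α ∈ (0,1), k, ε1, ε2, δ1, δ2, k2, k4 > 0, set Q = (δ1δ2 + δ1k4 + k2δ2)/(δ2 + k4), and assume ε1 − αQ > 0 and ξ = Q/(ε1 − αQ). Then ε1ξ/(1+αξ) = Q, and consequently for every y1* > 0 the point (0, y1*, 0, k4 y1*/(δ2 + k4)) is an equilibrium of the dispersal AF patch model, i.e., all four right-hand sides vanish there. -/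
/-!
Solving `ε₁ξ/(1 + αξ) = Q` for `ξ` gives `ξ = Q/(ε₁ − αQ)`, so at this AF quantity the pest
per-capita growth in patch 1 at `x₁ = 0` is exactly `Q = δ₁ + k₂δ₂/(δ₂ + k₄)`. With
`y₂* = k₄y₁*/(δ₂ + k₄)` the emigration loss `k₂(y₁* − y₂*) = k₂δ₂y₁*/(δ₂ + k₄)` is then balanced in
patch 1, and in patch 2 the death rate `δ₂y₂*` equals the immigration `k₄(y₁* − y₂*)`.
-/

section Field

variable {K : Type*} [Field K]

theorem mul_div_one_add_mul_eq_of_eq_div_sub {ε α Q ξ : K} (hε : ε ≠ 0) (hQ : ε - α * Q ≠ 0)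
    (hξ : ξ = Q / (ε - α * Q)) : ε * ξ / (1 + α * ξ) = Q := by
  have hdenom : 1 + α * ξ = ε / (ε - α * Q) := by
    rw [hξ]
    field_simp
    ring
  rw [hdenom, hξ, mul_div_assoc', div_div_div_cancel_right₀ hQ, mul_div_cancel_left₀ _ hε]

theorem sub_mul_div_add_eq {a b y : K} (h : a + b ≠ 0) :
    y - b * y / (a + b) = a * y / (a + b) := by
  field_simp
  ring

theorem mul_add_mul_add_mul_div_add_eq {d₁ d₂ k₂ k₄ : K} (h : d₂ + k₄ ≠ 0) :
    (d₁ * d₂ + d₁ * k₄ + k₂ * d₂) / (d₂ + k₄) = d₁ + k₂ * d₂ / (d₂ + k₄) := by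
  field_simp

end Field

theorem dispersal_pest_free_both_patches_exists_general
    (α ξ k ε1 ε2 δ1 δ2 k2 k4 : ℝ)
    (hε1 : 0 < ε1)
    (hδ2 : 0 < δ2)
    (hk4 : 0 < k4)
    (Q : ℝ) (hQ : Q = (δ1 * δ2 + δ1 * k4 + k2 * δ2) / (δ2 + k4))
    (hden : ε1 - α * Q > 0)
    (hξ : ξ = Q / (ε1 - α * Q)) :
    ε1 * ξ / (1 + α * ξ) = Q ∧
    ∀ y1s : ℝ, 0 < y1s →
      (0 : ℝ) * (1 - 0 / k) - 0 * y1s / (1 + 0 + α * ξ) = 0 ∧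
      ε1 * (((0 : ℝ) + ξ) / (1 + 0 + α * ξ)) * y1s - δ1 * y1s
        + k2 * (k4 * y1s / (δ2 + k4) - y1s) = 0 ∧
      (0 : ℝ) * (1 - 0 / k) - 0 * (k4 * y1s / (δ2 + k4)) / (1 + 0) = 0 ∧
      ε2 * ((0 : ℝ) / (1 + 0)) * (k4 * y1s / (δ2 + k4))
        - δ2 * (k4 * y1s / (δ2 + k4))
        + k4 * (y1s - k4 * y1s / (δ2 + k4)) = 0 := by
  have hsum : δ2 + k4 ≠ 0 := by positivity
  have hgrowth := mul_div_one_add_mul_eq_of_eq_div_sub hε1.ne' hden.ne' hξ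
  have hQ' : Q = δ1 + k2 * δ2 / (δ2 + k4) := hQ.trans (mul_add_mul_add_mul_div_add_eq hsum)
  refine ⟨hgrowth, fun y1s _ => ⟨by ring, ?_, by ring, ?_⟩⟩
  · have hmigration : k4 * y1s / (δ2 + k4) - y1s = -(δ2 * y1s / (δ2 + k4)) := by
      rw [← sub_mul_div_add_eq hsum, neg_sub]
    rw [zero_add, add_zero, ← mul_div_assoc, hgrowth, hmigration, hQ']
    ring
  · rw [sub_mul_div_add_eq hsum]
    ring

/-- Lemma 3.7: existence of the pest free state in both patches for the
dispersal AF patch model, under the strict equality `ξ = Q/(ε1 − αQ)`. -/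
theorem dispersal_pest_free_both_patches_exists
    (α ξ k ε1 ε2 δ1 δ2 k2 k4 : ℝ)
    (hα : 0 < α ∧ α < 1)
    (hk : 0 < k)
    (hε1 : 0 < ε1) (hε2 : 0 < ε2)
    (hδ1 : 0 < δ1) (hδ2 : 0 < δ2)
    (hk2 : 0 < k2) (hk4 : 0 < k4)
    (Q : ℝ) (hQ : Q = (δ1 * δ2 + δ1 * k4 + k2 * δ2) / (δ2 + k4))
    (hden : ε1 - α * Q > 0)
    (hξ : ξ = Q / (ε1 - α * Q)) :
    ε1 * ξ / (1 + α * ξ) = Q ∧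
    ∀ y1s : ℝ, 0 < y1s →
      (0 : ℝ) * (1 - 0 / k) - 0 * y1s / (1 + 0 + α * ξ) = 0 ∧
      ε1 * (((0 : ℝ) + ξ) / (1 + 0 + α * ξ)) * y1s - δ1 * y1s
        + k2 * (k4 * y1s / (δ2 + k4) - y1s) = 0 ∧
      (0 : ℝ) * (1 - 0 / k) - 0 * (k4 * y1s / (δ2 + k4)) / (1 + 0) = 0 ∧
      ε2 * ((0 : ℝ) / (1 + 0)) * (k4 * y1s / (δ2 + k4))
        - δ2 * (k4 * y1s / (δ2 + k4))
        + k4 * (y1s - k4 * y1s / (δ2 + k4)) = 0 :=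
  dispersal_pest_free_both_patches_exists_general α ξ k ε1 ε2 δ1 δ2 k2 k4 hε1 hδ2 hk4 Q hQ hden hξ
end

section
/- (Lemma 3.13, the AF patch model can keep the pest lower than the Rosenzweig–MacArthur model.) Let α ∈ (0,1) and ε1, ε2, δ1, δ2, k2, k4, ξ > 0 with ε2 > δ2, ε1 > αδ1, ε1 > α(δ1+k2), and δ1/(ε1 − αδ1) < ξ < (δ1+k2)/(ε1 − α(δ1+k2)). Set Q̃ = δ2 + k4 + k2k4/(ε1ξ/(1+αξ) − δ1 − k2) and assume Q̃ > 0. Then Q̃ < δ2, and hence the patch-model pest level x2* = Q̃/(ε2 − Q̃) satisfies x2* < δ2/(ε2 − δ2) = x_r*, the pest level of the Rosenzweig–MacArthur model. -/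
/-- Lemma 3.13: under `δ1/(ε1 − αδ1) < ξ < (δ1+k2)/(ε1 − α(δ1+k2))`, the
effective loss rate `Q̃` satisfies `Q̃ < δ2`, hence the patch-model pest level
`x2* = Q̃/(ε2 − Q̃)` is lower than the Rosenzweig–MacArthur pest level
`x_r* = δ2/(ε2 − δ2)`. -/
theorem patch_model_lower_pest_than_RM
    (α ε1 ε2 δ1 δ2 k2 k4 ξ : ℝ)
    (hα : 0 < α ∧ α < 1)
    (hε1 : 0 < ε1) (hε2 : 0 < ε2)
    (hδ1 : 0 < δ1) (hδ2 : 0 < δ2)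
    (hk2 : 0 < k2) (hk4 : 0 < k4) (hξ : 0 < ξ)
    (hε2δ2 : ε2 > δ2)
    (hε1αδ1 : ε1 > α * δ1)
    (hε1αδ1k2 : ε1 > α * (δ1 + k2))
    (hξlow : δ1 / (ε1 - α * δ1) < ξ)
    (hξhigh : ξ < (δ1 + k2) / (ε1 - α * (δ1 + k2)))
    (Qt : ℝ)
    (hQt : Qt = δ2 + k4 + k2 * k4 / (ε1 * ξ / (1 + α * ξ) - δ1 - k2))
    (hQtpos : 0 < Qt) :
    Qt < δ2 ∧ Qt / (ε2 - Qt) < δ2 / (ε2 - δ2) := by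
  obtain ⟨hα0, hα1⟩ := hα
  have hs : 0 < 1 + α * ξ := by positivity
  have h1 : δ1 * (1 + α * ξ) < ε1 * ξ := by
    have := (div_lt_iff₀ (by linarith : 0 < ε1 - α * δ1)).mp hξlow
    nlinarith
  have h2 : ε1 * ξ < (δ1 + k2) * (1 + α * ξ) := by
    have := (lt_div_iff₀ (by linarith : 0 < ε1 - α * (δ1 + k2))).mp hξhigh
    nlinarith
  set D := ε1 * ξ / (1 + α * ξ) - δ1 - k2 with hD
  have hDneg : D < 0 := by
    have h : ε1 * ξ / (1 + α * ξ) < δ1 + k2 := (div_lt_iff₀ hs).mpr (by nlinarith)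
    rw [hD]; linarith
  have hDgt : -k2 < D := by
    have h : δ1 < ε1 * ξ / (1 + α * ξ) := (lt_div_iff₀ hs).mpr (by nlinarith)
    rw [hD]; linarith
  have hfrac : k2 * k4 / D < -k4 := by
    rw [div_lt_iff_of_neg hDneg]
    nlinarith
  have hQtδ2 : Qt < δ2 := by rw [hQt]; linarith
  refine ⟨hQtδ2, ?_⟩
  rw [div_lt_div_iff₀ (by linarith) (by linarith)]
  nlinarith
end

section
/- (Lemma 3.14, the AF patch model can have a higher pest level than the Rosenzweig–MacArthur model.) Let α ∈ (0,1) and δ1, δ2, k2, k4 > 0, set Q = (δ1δ2 + δ1k4 + k2δ2)/(δ2 + k4) = δ1 + k2δ2/(δ2+k4), and let ε1 > Q. If 0 < ξ < ε1(Q − δ1)/((ε1 − αQ)(ε1 − δ1)), then the patch-model pest level x1* = (Q(1+αξ) − ε1ξ)/(ε1 − Q) satisfies x1* > δ1/(ε1 − δ1) = x_r*, the pest level of the Rosenzweig–MacArthur model. -/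
/-- Lemma 3.14: if `0 < ξ < ε1(Q − δ1)/((ε1 − αQ)(ε1 − δ1))`, the patch-model
pest level `x1* = (Q(1+αξ) − ε1ξ)/(ε1 − Q)` is higher than the
Rosenzweig–MacArthur pest level `x_r* = δ1/(ε1 − δ1)`. -/
theorem patch_model_higher_pest_than_RM
    (α δ1 δ2 k2 k4 ε1 ξ : ℝ)
    (hα : 0 < α ∧ α < 1)
    (hδ1 : 0 < δ1) (hδ2 : 0 < δ2)
    (hk2 : 0 < k2) (hk4 : 0 < k4)
    (Q : ℝ) (hQ : Q = (δ1 * δ2 + δ1 * k4 + k2 * δ2) / (δ2 + k4))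
    (hε1 : ε1 > Q)
    (hξpos : 0 < ξ)
    (hξlt : ξ < ε1 * (Q - δ1) / ((ε1 - α * Q) * (ε1 - δ1))) :
    (Q * (1 + α * ξ) - ε1 * ξ) / (ε1 - Q) > δ1 / (ε1 - δ1) := by
  obtain ⟨hα0, hα1⟩ := hα
  have hd : 0 < δ2 + k4 := by linarith
  have hQe : Q * (δ2 + k4) = δ1 * (δ2 + k4) + k2 * δ2 := by
    rw [hQ]; field_simp
  have hQgt : δ1 < Q := by nlinarith
  have hQpos : 0 < Q := lt_trans hδ1 hQgt
  have h1 : 0 < ε1 - Q := by linarith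
  have h2 : 0 < ε1 - δ1 := by linarith
  have h3 : 0 < ε1 - α * Q := by nlinarith
  have hB : 0 < (ε1 - α * Q) * (ε1 - δ1) := mul_pos h3 h2
  have hkey : ξ * ((ε1 - α * Q) * (ε1 - δ1)) < ε1 * (Q - δ1) :=
    (lt_div_iff₀ hB).mp hξlt
  rw [gt_iff_lt, div_lt_div_iff₀ h2 h1]
  nlinarith
end

section
/- (Necessary-condition content of Lemma 3.15 comparing the patch model with the classical AF model.) Let α ∈ (0,1) and ε1, ε2, δ1, δ2, k2, k4, ξ > 0 with ε2 > αδ2, ε1 > α(δ1+k2), and ε1ξ/(1+αξ) < δ1 + k2 (so s := ε1ξ/(1+αξ) − δ1 − k2 < 0). Set Q̃ = δ2 + k4 + k2k4/s. If Q̃ < δ2 + ξ(αδ2 − ε2), then ξ > (k4(ε1 − αδ1) + (δ1 + k2)(αδ2 − ε2)) / ((ε1 − α(δ1+k2))·(αδ2 − ε2)). -/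
/-!
Write `a = ε1 − α(δ1 + k2) > 0`, `b = αδ2 − ε2 < 0` and `s = ε1ξ/(1+αξ) − δ1 − k2 < 0`.
Multiplying the hypothesis `Q̃ < δ2 + ξb` by `s < 0` and then by `1 + αξ > 0`, and using
`s(1 + αξ) = ξa − (δ1 + k2)`, turns it into the polynomial inequality
`ξ (ξab − (k4(ε1 − αδ1) + (δ1 + k2)b)) + k4δ1 < 0`.
Since `k4δ1 > 0` and `ξ > 0`, the bracket is negative, which is the claim after dividing by `ab < 0`.
-/

lemma patch_rate_mul_one_add {K : Type*} [Field K] {α ε1 δ1 k2 ξ : K} (hu : 1 + α * ξ ≠ 0) :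
    (ε1 * ξ / (1 + α * ξ) - δ1 - k2) * (1 + α * ξ) =
      ξ * (ε1 - α * (δ1 + k2)) - (δ1 + k2) := by
  rw [sub_sub, sub_mul, div_mul_cancel₀ _ hu]
  ring

lemma div_lt_of_mul_mul_sub_neg {K : Type*} [Field K] [LinearOrder K] [IsStrictOrderedRing K]
    {ξ D N : K} (hξ : 0 < ξ) (hD : D < 0)
    (h : ξ * (ξ * D - N) < 0) : N / D < ξ := by
  have hneg : ξ * D - N < 0 := neg_of_mul_neg_right h hξ.le
  rw [div_lt_iff_of_neg hD]
  linarith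

theorem patch_beats_classical_AF_necessary_condition_general
    (α ε1 ε2 δ1 δ2 k2 k4 ξ : ℝ)
    (hα : 0 < α ∧ α < 1)
    (hδ1 : 0 < δ1)
    (hk4 : 0 < k4) (hξ : 0 < ξ)
    (hε2αδ2 : ε2 > α * δ2)
    (hε1αδ1k2 : ε1 > α * (δ1 + k2))
    (hsneg : ε1 * ξ / (1 + α * ξ) < δ1 + k2)
    (Qt : ℝ)
    (hQt : Qt = δ2 + k4 + k2 * k4 / (ε1 * ξ / (1 + α * ξ) - δ1 - k2))
    (hcond : Qt < δ2 + ξ * (α * δ2 - ε2)) :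
    ξ > (k4 * (ε1 - α * δ1) + (δ1 + k2) * (α * δ2 - ε2)) /
        ((ε1 - α * (δ1 + k2)) * (α * δ2 - ε2)) := by
  have hu : 0 < 1 + α * ξ := by nlinarith [hα.1]
  have hs : ε1 * ξ / (1 + α * ξ) - δ1 - k2 < 0 := by linarith
  have hcleared_s :
      (ξ * (α * δ2 - ε2) - k4) * (ε1 * ξ / (1 + α * ξ) - δ1 - k2) < k2 * k4 := by
    rw [← div_lt_iff_of_neg hs]
    linarith
  have hcleared :
      (ξ * (α * δ2 - ε2) - k4) * (ξ * (ε1 - α * (δ1 + k2)) - (δ1 + k2)) <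
        k2 * k4 * (1 + α * ξ) := by
    rw [← patch_rate_mul_one_add hu.ne', ← mul_assoc]
    exact mul_lt_mul_of_pos_right hcleared_s hu
  have hD : (ε1 - α * (δ1 + k2)) * (α * δ2 - ε2) < 0 :=
    mul_neg_of_pos_of_neg (by linarith) (by linarith)
  refine div_lt_of_mul_mul_sub_neg hξ hD ?_
  linear_combination hcleared + mul_pos hk4 hδ1

/-- Necessary-condition content of Lemma 3.15: if
`Q̃ < δ2 + ξ(αδ2 − ε2)` (the condition for the patch model to beat the
classical AF model), then
`ξ > (k4(ε1 − αδ1) + (δ1 + k2)(αδ2 − ε2)) / ((ε1 − α(δ1+k2))(αδ2 − ε2))`. -/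
theorem patch_beats_classical_AF_necessary_condition
    (α ε1 ε2 δ1 δ2 k2 k4 ξ : ℝ)
    (hα : 0 < α ∧ α < 1)
    (hε1 : 0 < ε1) (hε2 : 0 < ε2)
    (hδ1 : 0 < δ1) (hδ2 : 0 < δ2)
    (hk2 : 0 < k2) (hk4 : 0 < k4) (hξ : 0 < ξ)
    (hε2αδ2 : ε2 > α * δ2)
    (hε1αδ1k2 : ε1 > α * (δ1 + k2))
    (hsneg : ε1 * ξ / (1 + α * ξ) < δ1 + k2)
    (Qt : ℝ)
    (hQt : Qt = δ2 + k4 + k2 * k4 / (ε1 * ξ / (1 + α * ξ) - δ1 - k2))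
    (hcond : Qt < δ2 + ξ * (α * δ2 - ε2)) :
    ξ > (k4 * (ε1 - α * δ1) + (δ1 + k2) * (α * δ2 - ε2)) /
        ((ε1 - α * (δ1 + k2)) * (α * δ2 - ε2)) :=
  patch_beats_classical_AF_necessary_condition_general α ε1 ε2 δ1 δ2 k2 k4 ξ hα hδ1 hk4 hξ hε2αδ2
    hε1αδ1k2 hsneg Qt hQt hcond
end

section
/- (Lemma 3.16, the AF patch model can have a higher pest level than the classical AF model.) Let α ∈ (0,1) and δ1, δ2, k2, k4 > 0, set Q = (δ1δ2 + δ1k4 + k2δ2)/(δ2 + k4), and let ε1 > Q. If ε1Q/(δ1(α−1)(ε1 − αQ)) < ξ and 0 < ξ < δ1/(ε1 − αδ1), then the patch-model pest level x1* = (Q(1+αξ) − ε1ξ)/(ε1 − Q) satisfies x1* > (δ1 + ξ(αδ1 − ε1))/(ε1 − δ1) = x_h*, the pest level of the classical AF model. -/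
/-- Lemma 3.16: if `ε1 Q/(δ1(α−1)(ε1−αQ)) < ξ < δ1/(ε1−αδ1)`, the
patch-model pest level `x1* = (Q(1+αξ) − ε1ξ)/(ε1 − Q)` is higher than the
classical AF model's pest level `x_h* = (δ1 + ξ(αδ1 − ε1))/(ε1 − δ1)`. -/
theorem patch_model_higher_pest_than_classical_AF
    (α δ1 δ2 k2 k4 ε1 ξ : ℝ)
    (hα : 0 < α ∧ α < 1)
    (hδ1 : 0 < δ1) (hδ2 : 0 < δ2)
    (hk2 : 0 < k2) (hk4 : 0 < k4)
    (Q : ℝ) (hQ : Q = (δ1 * δ2 + δ1 * k4 + k2 * δ2) / (δ2 + k4))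
    (hε1 : ε1 > Q)
    (hξpos : 0 < ξ)
    (hξlow : ε1 * Q / (δ1 * (α - 1) * (ε1 - α * Q)) < ξ)
    (hξhigh : ξ < δ1 / (ε1 - α * δ1)) :
    (Q * (1 + α * ξ) - ε1 * ξ) / (ε1 - Q) >
      (δ1 + ξ * (α * δ1 - ε1)) / (ε1 - δ1) := by
  obtain ⟨hα0, hα1⟩ := hα
  have hden : 0 < δ2 + k4 := by linarith
  have hQδ1 : δ1 < Q := by
    rw [hQ, lt_div_iff₀ hden]; nlinarith
  have hε1δ1 : δ1 < ε1 := lt_trans hQδ1 hε1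
  have hεα : 0 < ε1 - α * δ1 := by nlinarith
  have hξ' : ξ * (ε1 - α * δ1) < δ1 := by
    rw [lt_div_iff₀ hεα] at hξhigh; exact hξhigh
  have hkey : ξ * (1 - α) < 1 := by nlinarith
  rw [gt_iff_lt, div_lt_div_iff₀ (by linarith) (by linarith)]
  nlinarith [mul_pos (mul_pos (show (0:ℝ) < ε1 by linarith)
    (show (0:ℝ) < Q - δ1 by linarith)) (show (0:ℝ) < 1 - ξ * (1 - α) by linarith)]
end
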